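/- Suppose ρ is the Gaussian density N(μ, Σ) on ℝ^d with Σ symmetric positive definite, and h(x) = H·x for a fixed vector H ∈ ℝ^d. Then φ(x) = (ΣH)·(x - μ) is a zero-mean solution of the weighted Poisson equation ∇·(ρ ∇φ) = -(h - ĥ) ρ, where ĥ = H·μ; in particular the gain ∇φ = ΣH is the Kalman gain (constant in x). -/

import Mathlib

open MeasureTheory Matrix

/-- Divergence of a vector field on Euclidean space: `div F (x) = ∑ i ∂F_i/∂x_i`. -/
noncomputable def divg {d : ℕ}
    (F : EuclideanSpace ℝ (Fin d) → EuclideanSpace ℝ (Fin d))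
    (x : EuclideanSpace ℝ (Fin d)) : ℝ :=
  ∑ i, fderiv ℝ F x (EuclideanSpace.single i (1 : ℝ)) i

/-!
The potential `φ` is affine with constant gradient `c = ΣH`, so `∇·(ρ c) = ⟪∇ρ, c⟫`. The Gaussian
has `∇ρ(x) = -ρ(x) Σ⁻¹(x - μ)`, and symmetry of `Σ⁻¹` turns `⟪Σ⁻¹(x - μ), ΣH⟫` into
`⟪x - μ, H⟫ = h(x) - ĥ`. The mean of `φ` vanishes because `φρ` is odd about `μ`.
-/

open scoped RealInnerProductSpace

section Gradients

variable {F : Type*} [NormedAddCommGroup F] [InnerProductSpace ℝ F] [CompleteSpace F]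

lemma hasGradientAt_inner_sub_const (c μ x : F) :
    HasGradientAt (fun y => ⟪c, y - μ⟫) c x := by
  rw [hasGradientAt_iff_hasFDerivAt]
  refine ((innerSL ℝ c).hasFDerivAt.comp x (hasFDerivAt_sub_const μ)).congr_fderiv ?_
  ext v
  simp

lemma LinearMap.IsSymmetric.hasGradientAt_inner_map_self {T : F →L[ℝ] F}
    (hT : (T : F →ₗ[ℝ] F).IsSymmetric) (x : F) :
    HasGradientAt (fun y => ⟪y, T y⟫) ((2 : ℝ) • T x) x := by
  rw [hasGradientAt_iff_hasFDerivAt]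
  refine (hasFDerivAt_id x |>.inner ℝ T.hasFDerivAt).congr_fderiv ?_
  ext v
  have hTxv : ⟪T x, v⟫ = ⟪x, T v⟫ := hT x v
  simp [fderivInnerCLM_apply, two_smul, real_inner_comm (T x) v, hTxv]

lemma LinearMap.IsSymmetric.hasGradientAt_gaussian {T : F →L[ℝ] F}
    (hT : (T : F →ₗ[ℝ] F).IsSymmetric) (Z : ℝ) (μ x : F) :
    HasGradientAt (fun y => Z * Real.exp (-(1 / 2) * ⟪y - μ, T (y - μ)⟫))
      (-(Z * Real.exp (-(1 / 2) * ⟪x - μ, T (x - μ)⟫)) • T (x - μ)) x := by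
  have hq := (hT.hasGradientAt_inner_map_self (x - μ)).hasFDerivAt.comp x
    (hasFDerivAt_sub_const μ)
  rw [hasGradientAt_iff_hasFDerivAt]
  refine ((hq.const_mul (-(1 / 2) : ℝ)).exp.const_mul Z).congr_fderiv ?_
  ext v
  simp only [Function.comp_apply, ContinuousLinearMap.comp_id, _root_.smul_apply,
    InnerProductSpace.toDual_apply_apply, smul_eq_mul, map_smul]
  ring

end Gradients

lemma divg_smul_const {d : ℕ} {f : EuclideanSpace ℝ (Fin d) → ℝ} {g x : EuclideanSpace ℝ (Fin d)}
    (hf : HasGradientAt f g x) (c : EuclideanSpace ℝ (Fin d)) :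
    divg (fun y => f y • c) x = ⟪g, c⟫ := by
  rw [divg, (hf.hasFDerivAt.smul_const c).fderiv]
  conv_rhs => rw [← (EuclideanSpace.basisFun (Fin d) ℝ).sum_repr c]
  simp [inner_sum, inner_smul_right, mul_comm]

lemma integral_eq_zero_of_odd_about {G E : Type*} [MeasurableSpace G] [AddGroup G]
    [MeasurableAdd G] [MeasurableNeg G] [NormedAddCommGroup E] [NormedSpace ℝ E]
    (ν : Measure G) [ν.IsAddLeftInvariant] [ν.IsNegInvariant] {g : G → E} (μ : G)
    (hg : ∀ y, g (μ - y) = -g (μ + y)) :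
    ∫ x, g x ∂ν = 0 := by
  have h : ∫ y, g (μ + y) ∂ν = -∫ y, g (μ + y) ∂ν := calc
    ∫ y, g (μ + y) ∂ν = ∫ y, g (μ - y) ∂ν :=
      ((integral_sub_left_eq_self g ν μ).trans (integral_add_left_eq_self g μ).symm).symm
    _ = -∫ y, g (μ + y) ∂ν := by simp_rw [hg, integral_neg]
  have h2 : (2 : ℝ) • ∫ y, g (μ + y) ∂ν = 0 := by
    rw [two_smul]
    nth_rewrite 2 [h]
    exact add_neg_cancel _
  rw [← integral_add_left_eq_self g μ]
  exact (smul_eq_zero.mp h2).resolve_left two_ne_zero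

/-- Linear Gaussian case: for `ρ = N(μ,Σ)` and `h(x) = H·x`,
`φ(x) = (ΣH)·(x-μ)` is a zero-mean solution of `∇·(ρ∇φ) = -(h-ĥ)ρ` with
`ĥ = H·μ`; the gain `∇φ = ΣH` is the (constant) Kalman gain. -/
theorem stmt4 {d : ℕ} (S : Matrix (Fin d) (Fin d) ℝ) (hS : S.PosDef)
    (μ H : EuclideanSpace ℝ (Fin d))
    (ρ h φ : EuclideanSpace ℝ (Fin d) → ℝ)
    (hρ : ∀ x, ρ x = (Real.sqrt ((2 * Real.pi) ^ d * S.det))⁻¹ *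
      Real.exp (-(1/2) * ((fun i => x i - μ i) ⬝ᵥ S⁻¹ *ᵥ (fun i => x i - μ i))))
    (hh : ∀ x, h x = ∑ i, H i * x i)
    (hhat : ℝ) (hhat_def : hhat = ∑ i, H i * μ i)
    (hφ : ∀ x, φ x = ∑ i, (S *ᵥ (fun j => H j)) i * (x i - μ i)) :
    (∀ x, ∀ i, gradient φ x i = (S *ᵥ (fun j => H j)) i) ∧
    (∀ x, divg (fun y => ρ y • gradient φ y) x = -((h x - hhat) * ρ x)) ∧
    (∫ x, φ x * ρ x = 0) := by
  set c : EuclideanSpace ℝ (Fin d) := WithLp.toLp 2 (S *ᵥ fun j => H j)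
  set T : EuclideanSpace ℝ (Fin d) →L[ℝ] EuclideanSpace ℝ (Fin d) := toEuclideanCLM (𝕜 := ℝ) S⁻¹
  set Z := (Real.sqrt ((2 * Real.pi) ^ d * S.det))⁻¹
  have hT : (T : EuclideanSpace ℝ (Fin d) →ₗ[ℝ] EuclideanSpace ℝ (Fin d)).IsSymmetric :=
    isSymmetric_toEuclideanLin_iff.mpr hS.inv.isHermitian
  have hTc : T c = H := by
    ext i
    simp [T, c, mulVec_mulVec, nonsing_inv_mul S ((isUnit_iff_isUnit_det S).mp hS.isUnit)]
  have hφ' : φ = fun x => ⟪c, x - μ⟫ := by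
    funext x
    simp [hφ x, c, PiLp.inner_apply, mul_comm]
  have hρ' (x) : ρ x = Z * Real.exp (-(1 / 2) * ⟪x - μ, T (x - μ)⟫) := by
    rw [hρ x, inner_toEuclideanCLM]
    rfl
  have hgrad (x) : gradient φ x = c := hφ' ▸ (hasGradientAt_inner_sub_const c μ x).gradient
  refine ⟨fun x i => by rw [hgrad x], fun x => ?_, ?_⟩
  · have hρgrad : HasGradientAt ρ (-ρ x • T (x - μ)) x := by
      rw [hρ' x, funext hρ']
      exact hT.hasGradientAt_gaussian Z μ x
    calc divg (fun y => ρ y • gradient φ y) x = divg (fun y => ρ y • c) x := by simp_rw [hgrad]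
      _ = -ρ x * ⟪x - μ, T c⟫ := by
        rw [divg_smul_const hρgrad, real_inner_smul_left]
        exact congrArg _ (hT _ _)
      _ = -((h x - hhat) * ρ x) := by
        have hlin : ⟪x - μ, T c⟫ = h x - hhat := by
          simp [hTc, hh, hhat_def, PiLp.inner_apply, ← Finset.sum_sub_distrib, mul_sub, mul_comm]
        rw [hlin]
        ring
  · refine integral_eq_zero_of_odd_about volume μ fun y => ?_
    simp [hφ', hρ']
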